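/- For all m ≥ 1, all 1 ≤ r ≤ m−1, and all n ≥ 1, the higher order Bell numbers satisfy B_n^(m) = Σ_{i=1}^n B_i^(m−r) · S^(r)(n,i). -/

import Mathlib

/-- `m`-th order ("hyper") partitions of a finite set `s`:
a chain `(P₁, …, P_m)` where `P₁` is a partition of `s` and each `P_{j+1}`
is a partition of the set of blocks of `P_j`. For `m = 0` it is `s` itself
(a single trivial object). -/
def HyperPartition : (m : ℕ) → {α : Type} → [DecidableEq α] → Finset α → Type
  | 0, _, _, _ => PUnit
  | m + 1, _, _, s => (P : Finpartition s) × HyperPartition m P.parts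

/-- The number of blocks of the outermost partition of a hyper partition
(for `m = 0`, by convention, the cardinality of the underlying set). -/
def HyperPartition.outerBlocks :
    (m : ℕ) → {α : Type} → [DecidableEq α] → {s : Finset α} →
      HyperPartition m s → ℕ
  | 0, _, _, s, _ => s.card
  | 1, _, _, _, p => p.1.parts.card
  | m + 2, _, _, _, p => HyperPartition.outerBlocks (m + 1) p.2

/-- `|℘ₙ^(m)|`: the number of `m`-th order partitions of an `n`-element set. -/
noncomputable def hyperBell (m n : ℕ) : ℕ :=
  Nat.card (HyperPartition m (Finset.univ : Finset (Fin n)))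

/-- The `m`-th order Stirling number `S^(m)(n,k)`: the number of `m`-th order
partitions of an `n`-element set whose outermost partition has exactly `k` blocks. -/
noncomputable def hyperStirling (m n k : ℕ) : ℕ :=
  Nat.card {p : HyperPartition m (Finset.univ : Finset (Fin n)) //
    HyperPartition.outerBlocks m p = k}

/-- The ordinary Stirling number of the second kind `S(n,k)`: the number of
set partitions of an `n`-element set into exactly `k` blocks. -/
noncomputable def stirling (n k : ℕ) : ℕ :=
  Nat.card {P : Finpartition (Finset.univ : Finset (Fin n)) // P.parts.card = k}

/-- Composition `f(g(x))` of formal power series (intended for `g` with zero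
constant term, in which case `coeff n (g ^ i) = 0` for `i > n`). -/
noncomputable def psComp (f g : PowerSeries ℚ) : PowerSeries ℚ :=
  PowerSeries.mk fun n =>
    PowerSeries.coeff (R := ℚ) n
      (∑ i ∈ Finset.range (n + 1), PowerSeries.C (R := ℚ) (PowerSeries.coeff (R := ℚ) i f) * g ^ i)

/-- The iterated exponential series: `E₀ = exp x`, `E_{m+1} = exp (E_m - 1)`. -/
noncomputable def E : ℕ → PowerSeries ℚ
  | 0 => PowerSeries.exp ℚ
  | m + 1 => psComp (PowerSeries.exp ℚ) (E m - 1)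

/-- The `m`-th order Bell number `Bₙ^(m) = n! · [xⁿ] E_m(x)`. -/
noncomputable def bell (m n : ℕ) : ℚ :=
  (n.factorial : ℚ) * PowerSeries.coeff (R := ℚ) n (E m)


/-!
Substitution of power series gives `E (m + 1) = E m ∘ (exp x - 1)`, and
`n! [xⁿ] (exp x - 1)ᵏ = k! S(n, k)` because both sides satisfy the recursion coming from
`(exp x - 1)ᵏ⁺¹ = (exp x - 1)ᵏ (exp x - 1)`; hence `B^(m+1)_n = ∑ₖ S(n, k) B^(m)_k`.
Forgetting the innermost partition `P₁` of an `(r + 1)`-th order partition leaves an `r`-th order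
partition of the blocks of `P₁`, so `S^(r+1)(n, i) = ∑ₖ S(n, k) S^(r)(k, i)`. Induction on `r`,
starting from `S^(0)(n, i) = [n = i]`, gives `B^(k+r)_n = ∑ᵢ B^(k)_i S^(r)(n, i)`, and for `n ≥ 1`
the term `i = 0` vanishes.
-/

open PowerSeries Finset

lemma PowerSeries.coeff_pow_eq_zero_of_lt {R : Type*} [CommRing R] {g : R⟦X⟧}
    (hg : constantCoeff g = 0) {n d : ℕ} (h : n < d) : coeff n (g ^ d) = 0 :=
  coeff_of_lt_order n <| (Nat.cast_lt.2 h).trans_le (le_order_pow_of_constantCoeff_eq_zero d hg)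

lemma PowerSeries.subst_sub_one {R : Type*} [CommRing R] {f g : R⟦X⟧}
    (hg : constantCoeff g = 0) : (f - 1).subst g = f.subst g - 1 := by
  rw [← coe_substAlgHom (HasSubst.of_constantCoeff_zero' hg), map_sub, map_one]

lemma coeff_psComp (f g : ℚ⟦X⟧) (n : ℕ) :
    coeff n (psComp f g) = ∑ k ∈ range (n + 1), coeff k f * coeff n (g ^ k) := by
  simp only [psComp, coeff_mk, map_sum, coeff_C_mul]

lemma psComp_eq_subst (f : ℚ⟦X⟧) {g : ℚ⟦X⟧} (hg : constantCoeff g = 0) :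
    psComp f g = f.subst g := by
  ext n
  rw [coeff_psComp, coeff_subst' (HasSubst.of_constantCoeff_zero' hg),
    finsum_eq_sum_of_support_subset (s := range (n + 1))]
  · rfl
  · intro d hd
    by_contra h
    rw [coe_range, Set.mem_Iio, not_lt] at h
    exact hd (by simp [coeff_pow_eq_zero_of_lt hg (Nat.lt_of_succ_le h)])

lemma constantCoeff_psComp (f g : ℚ⟦X⟧) : constantCoeff (psComp f g) = constantCoeff f := by
  simpa using coeff_psComp f g 0

lemma constantCoeff_E (m : ℕ) : constantCoeff (E m) = 1 := by
  cases m <;> simp [E, constantCoeff_psComp]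

lemma E_succ (m : ℕ) : E (m + 1) = psComp (E m) (exp ℚ - 1) := by
  have hexp : constantCoeff (exp ℚ - 1) = 0 := by simp
  have hE (m : ℕ) : constantCoeff (E m - 1) = 0 := by simp [constantCoeff_E]
  rw [psComp_eq_subst _ hexp]
  induction m with
  | zero => exact psComp_eq_subst _ hexp
  | succ m ih =>
    calc E (m + 2) = subst (E (m + 1) - 1) (exp ℚ) := psComp_eq_subst _ (hE _)
      _ = subst (subst (exp ℚ - 1) (E m - 1)) (exp ℚ) := by rw [ih, subst_sub_one hexp]
      _ = subst (exp ℚ - 1) (subst (E m - 1) (exp ℚ)) :=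
        (subst_comp_subst_apply (HasSubst.of_constantCoeff_zero' (hE m))
          (HasSubst.of_constantCoeff_zero' hexp) _).symm
      _ = subst (exp ℚ - 1) (E (m + 1)) := by rw [E, psComp_eq_subst _ (hE m)]

namespace Finpartition

section Embed

variable {α β : Type*} [DecidableEq α] [DecidableEq β] (f : α ↪ β) {s : Finset α}

def embed (P : Finpartition s) : Finpartition (s.map f) :=
  ofExistsUnique (P.parts.map (mapEmbedding f).toEmbedding)
    (by
      simp only [mem_map, RelEmbedding.coe_toEmbedding, mapEmbedding_apply]
      rintro _ ⟨q, hq, rfl⟩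
      exact map_subset_map.2 (P.le hq))
    (by
      simp only [mem_map, RelEmbedding.coe_toEmbedding, mapEmbedding_apply]
      rintro _ ⟨a, ha, rfl⟩
      obtain ⟨q, ⟨hq, haq⟩, huniq⟩ := P.existsUnique_mem ha
      refine ⟨q.map f, ⟨⟨q, hq, rfl⟩, mem_map_of_mem f haq⟩, ?_⟩
      rintro _ ⟨⟨q', hq', rfl⟩, hfa⟩
      rw [huniq q' ⟨hq', (mem_map' f).1 hfa⟩])
    (by simp [P.empty_notMem_parts])

lemma embed_parts (P : Finpartition s) :
    (P.embed f).parts = P.parts.map (mapEmbedding f).toEmbedding := rfl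

lemma card_parts_embed (P : Finpartition s) : #(P.embed f).parts = #P.parts := card_map _

lemma embed_injective : Function.Injective (embed f : Finpartition s → _) := fun P Q h =>
  Finpartition.ext <| map_injective (mapEmbedding f).toEmbedding <| by
    rw [← embed_parts, ← embed_parts, h]

lemma embed_surjective : Function.Surjective (embed f : Finpartition s → _) := by
  intro Q
  refine ⟨ofExistsUnique (Q.parts.image fun B => s.filter (f · ∈ B)) ?_ ?_ ?_, ?_⟩
  · simp only [mem_image]
    rintro _ ⟨B, -, rfl⟩
    exact filter_subset _ _
  · intro a ha
    obtain ⟨B, ⟨hB, hfaB⟩, huniq⟩ := Q.existsUnique_mem (mem_map_of_mem f ha)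
    refine ⟨s.filter (f · ∈ B), ⟨mem_image_of_mem _ hB, mem_filter.2 ⟨ha, hfaB⟩⟩, ?_⟩
    rintro _ ⟨ht, hat⟩
    obtain ⟨B', hB', rfl⟩ := mem_image.1 ht
    rw [huniq B' ⟨hB', (mem_filter.1 hat).2⟩]
  · simp only [mem_image, not_exists, not_and]
    intro B hB hempty
    obtain ⟨b, hb⟩ := Q.nonempty_of_mem_parts hB
    obtain ⟨a, ha, rfl⟩ := mem_map.1 (Q.le hB hb)
    have hmem : a ∈ s.filter (f · ∈ B) := mem_filter.2 ⟨ha, hb⟩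
    rw [hempty] at hmem
    exact notMem_empty a hmem
  · refine Finpartition.ext ?_
    have hpreimage : ∀ B ∈ Q.parts, (s.filter (f · ∈ B)).map f = B := fun B hB => by
      change (s.filter ((· ∈ B) ∘ f)).map f = B
      rw [← filter_map, filter_mem_eq_inter, inter_eq_right.2 (Q.le hB)]
    rw [embed_parts, ofExistsUnique_parts, map_eq_image, image_image]
    exact (image_congr hpreimage).trans image_id

noncomputable def embedEquiv (s : Finset α) : Finpartition s ≃ Finpartition (s.map f) :=
  Equiv.ofBijective _ ⟨embed_injective f, embed_surjective f⟩

end Embed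

section MemParts

variable {α : Type*} [DecidableEq α] {s B : Finset α}

lemma avoid_parts_of_mem (P : Finpartition s) (hB : B ∈ P.parts) :
    (P.avoid B).parts = P.parts.erase B := by
  ext C
  rw [mem_avoid, mem_erase]
  constructor
  · rintro ⟨D, hD, hDB, rfl⟩
    have hne : D ≠ B := by rintro rfl; exact hDB le_rfl
    have hdisj : Disjoint D B := P.disjoint hD hB hne
    rw [hdisj.sdiff_eq_left]
    exact ⟨hne, hD⟩
  · rintro ⟨hne, hC⟩
    exact ⟨C, hC, fun hle => P.ne_bot hC ((P.disjoint hC hB hne).eq_bot_of_le hle),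
      (P.disjoint hC hB hne).sdiff_eq_left⟩

def memPartsEquiv (hB : B.Nonempty) (hBs : B ⊆ s) :
    {P : Finpartition s // B ∈ P.parts} ≃ Finpartition (s \ B) where
  toFun P := P.1.avoid B
  invFun Q := ⟨Q.extend hB.ne_empty sdiff_disjoint (sdiff_sup_cancel hBs), mem_insert_self _ _⟩
  left_inv P := Subtype.ext <| Finpartition.ext <| by
    rw [extend_parts, avoid_parts_of_mem _ P.2, insert_erase P.2]
  right_inv Q := Finpartition.ext <| by
    rw [avoid_parts_of_mem _ (mem_insert_self _ _), extend_parts, erase_insert]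
    intro hBQ
    obtain ⟨x, hx⟩ := hB
    simpa [hx] using Q.le hBQ hx

lemma card_parts_memPartsEquiv (hB : B.Nonempty) (hBs : B ⊆ s)
    (P : {P : Finpartition s // B ∈ P.parts}) :
    #(memPartsEquiv hB hBs P).parts + 1 = #P.1.parts := by
  rw [memPartsEquiv, Equiv.coe_fn_mk, avoid_parts_of_mem _ P.2, card_erase_add_one P.2]

end MemParts

end Finpartition

lemma Finset.exists_embedding_map_univ_eq {β : Type*} (t : Finset β) :
    ∃ (n : ℕ) (f : Fin n ↪ β), univ.map f = t :=
  ⟨#t, t.equivFin.symm.toEmbedding.trans (Function.Embedding.subtype _), by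
    ext b
    simpa using
      ⟨fun ⟨a, ha⟩ => ha ▸ (t.equivFin.symm a).2, fun hb => ⟨t.equivFin ⟨b, hb⟩, by simp⟩⟩⟩

lemma card_parts_eq_stirling {β : Type*} [DecidableEq β] (k : ℕ) (t : Finset β) :
    Nat.card {Q : Finpartition t // #Q.parts = k} = stirling #t k := by
  obtain ⟨n, f, rfl⟩ := t.exists_embedding_map_univ_eq
  rw [card_map, card_univ, Fintype.card_fin, stirling]
  exact Nat.card_congr ((Finpartition.embedEquiv f univ).subtypeEquiv fun P => by
    rw [← Finpartition.card_parts_embed f P]; rfl).symm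

lemma stirling_eq_card_filter (n k : ℕ) :
    stirling n k = #{P : Finpartition (univ : Finset (Fin n)) | #P.parts = k} := by
  rw [stirling, Nat.card_eq_fintype_card, Fintype.card_subtype]

lemma card_filter_mem_parts_eq_stirling {α : Type*} [DecidableEq α] {s B : Finset α}
    (hB : B.Nonempty) (hBs : B ⊆ s) (k : ℕ) :
    #{P : Finpartition s | B ∈ P.parts ∧ #P.parts = k + 1} = stirling #(s \ B) k := by
  rw [← card_parts_eq_stirling, ← Fintype.card_subtype, ← Nat.card_eq_fintype_card]
  refine Nat.card_congr <| (Equiv.subtypeSubtypeEquivSubtypeInter _ _).symm.trans <|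
    (Finpartition.memPartsEquiv hB hBs).subtypeEquiv fun P => ?_
  rw [← Finpartition.card_parts_memPartsEquiv hB hBs P, Nat.add_right_cancel_iff]

lemma stirling_zero_right (n : ℕ) : stirling n 0 = if n = 0 then 1 else 0 := by
  split_ifs with hn
  · subst hn
    have h : Nat.card {Q : Finpartition (⊥ : Finset ℕ) // #Q.parts = 0} = stirling 0 0 :=
      card_parts_eq_stirling 0 ⊥
    rw [← h, Nat.card_eq_one_iff_unique]
    exact ⟨inferInstance, ⟨⟨default, rfl⟩⟩⟩
  · rw [stirling, Nat.card_eq_zero]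
    refine Or.inl ⟨fun ⟨P, hP⟩ => ?_⟩
    have huniv : (univ : Finset (Fin n)).Nonempty := univ_nonempty_iff.2 ⟨⟨0, by omega⟩⟩
    exact (P.parts_nonempty huniv.ne_empty).ne_empty (card_eq_zero.1 hP)

-- Both sides count partitions into `k + 1` blocks with one marked block `B`; removing `B`
-- leaves a partition of the proper subset `Bᶜ` into `k` blocks.
theorem succ_mul_stirling_succ (n k : ℕ) :
    (k + 1) * stirling n (k + 1) = ∑ p ∈ range n, n.choose p * stirling p k := by
  set g : ℕ → ℕ := fun p => if p = n then 0 else stirling p k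
  have hblock (B : Finset (Fin n)) :
      #{P : Finpartition (univ : Finset (Fin n)) | B ∈ P.parts ∧ #P.parts = k + 1} = g #Bᶜ := by
    rcases B.eq_empty_or_nonempty with rfl | hB
    · simp [g, Finpartition.empty_notMem_parts]
    · have hcompl : #Bᶜ ≠ n := by
        simpa using (card_compl_lt_iff_nonempty B).2 hB |>.ne
      rw [card_filter_mem_parts_eq_stirling hB (subset_univ B), ← compl_eq_univ_sdiff]
      simp only [g, if_neg hcompl]
  calc (k + 1) * stirling n (k + 1)
      = ∑ P ∈ univ.filter (fun P : Finpartition (univ : Finset (Fin n)) => #P.parts = k + 1),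
          #P.parts := by
        rw [stirling_eq_card_filter, sum_const_nat fun P hP => (mem_filter.1 hP).2, mul_comm]
    _ = ∑ B : Finset (Fin n), g #Bᶜ := by
        have hcount := sum_card_bipartiteAbove_eq_sum_card_bipartiteBelow
          (fun (P : Finpartition (univ : Finset (Fin n))) B => B ∈ P.parts)
          (s := univ.filter fun P => #P.parts = k + 1) (t := univ)
        simp only [bipartiteAbove, bipartiteBelow, filter_univ_mem, filter_filter] at hcount
        rw [hcount]
        exact sum_congr rfl fun B _ => by rw [← hblock]; simp only [and_comm]
    _ = ∑ A : Finset (Fin n), g #A :=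
        Fintype.sum_bijective _ compl_bijective _ _ fun _ => rfl
    _ = ∑ p ∈ range n, n.choose p * stirling p k := by
        rw [← powerset_univ, sum_powerset_apply_card, card_univ, Fintype.card_fin,
          sum_range_succ]
        simp only [g, if_pos, smul_eq_mul, mul_zero, add_zero]
        exact sum_congr rfl fun p hp => by rw [if_neg (mem_range.1 hp).ne]

lemma coeff_exp_sub_one {n : ℕ} (hn : n ≠ 0) :
    coeff n (exp ℚ - 1) = (1 / n.factorial : ℚ) := by
  simp [coeff_exp, coeff_one, hn]

lemma factorial_mul_coeff_exp_sub_one_pow (n k : ℕ) :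
    (n.factorial : ℚ) * coeff n ((exp ℚ - 1) ^ k) = k.factorial * stirling n k := by
  induction k generalizing n with
  | zero => by_cases hn : n = 0 <;> simp [coeff_one, stirling_zero_right, hn]
  | succ k ih =>
    calc (n.factorial : ℚ) * coeff n ((exp ℚ - 1) ^ (k + 1))
        = ∑ p ∈ range n, (n.choose p : ℚ) * (p.factorial * coeff p ((exp ℚ - 1) ^ k)) := by
          rw [pow_succ, coeff_mul, Nat.sum_antidiagonal_eq_sum_range_succ_mk, sum_range_succ,
            Nat.sub_self, mul_add, mul_sum]
          simp only [coeff_zero_eq_constantCoeff, map_sub, constantCoeff_exp, map_one, sub_self,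
            mul_zero, add_zero]
          refine sum_congr rfl fun p hp => ?_
          have hpn := mem_range.1 hp
          rw [← map_sub, coeff_exp_sub_one (Nat.sub_ne_zero_of_lt hpn), Nat.cast_choose ℚ hpn.le]
          field_simp
      _ = ∑ p ∈ range n, (n.choose p : ℚ) * (k.factorial * stirling p k) := by simp_rw [ih]
      _ = (k + 1).factorial * stirling n (k + 1) := by
          rw [Nat.factorial_succ, Nat.cast_mul, mul_assoc, mul_left_comm, ← Nat.cast_mul (k + 1),
            succ_mul_stirling_succ, Nat.cast_sum, mul_sum]
          push_cast
          exact sum_congr rfl fun p _ => by ring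

lemma bell_succ (m n : ℕ) :
    bell (m + 1) n = ∑ k ∈ range (n + 1), (stirling n k : ℚ) * bell m k := by
  rw [bell, E_succ, coeff_psComp, mul_sum]
  refine sum_congr rfl fun k _ => ?_
  rw [bell, mul_left_comm, factorial_mul_coeff_exp_sub_one_pow]
  ring

namespace HyperPartition

instance finite : ∀ (m : ℕ) {α : Type} [DecidableEq α] (s : Finset α),
    Finite (HyperPartition m s)
  | 0, _, _, _ => inferInstanceAs (Finite PUnit)
  | m + 1, _, _, s =>
    have (P : Finpartition s) := finite m P.parts
    inferInstanceAs (Finite ((P : Finpartition s) × HyperPartition m P.parts))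

lemma outerBlocks_succ {α : Type} [DecidableEq α] {m : ℕ} {s : Finset α} (P : Finpartition s)
    (q : HyperPartition m P.parts) :
    outerBlocks (m + 1) (⟨P, q⟩ : HyperPartition (m + 1) s) = outerBlocks m q := by
  cases m <;> rfl

lemma outerBlocks_le_card : ∀ {m : ℕ} {α : Type} [DecidableEq α] {s : Finset α}
    (p : HyperPartition m s), outerBlocks m p ≤ #s
  | 0, _, _, _, _ => le_rfl
  | _ + 1, _, _, _, ⟨P, q⟩ => by
    rw [outerBlocks_succ]
    exact (outerBlocks_le_card q).trans P.card_parts_le_card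

lemma outerBlocks_pos : ∀ {m : ℕ} {α : Type} [DecidableEq α] {s : Finset α},
    s.Nonempty → ∀ p : HyperPartition m s, 0 < outerBlocks m p
  | 0, _, _, _, hs, _ => hs.card_pos
  | _ + 1, _, _, _, hs, ⟨P, q⟩ => by
    rw [outerBlocks_succ]
    exact outerBlocks_pos (P.parts_nonempty hs.ne_empty) q

noncomputable def embedEquiv : ∀ (m : ℕ) {α β : Type} [DecidableEq α] [DecidableEq β]
    (f : α ↪ β) (s : Finset α), HyperPartition m s ≃ HyperPartition m (s.map f)
  | 0, _, _, _, _, _, _ => Equiv.refl PUnit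
  | m + 1, _, _, _, _, f, s =>
    Equiv.sigmaCongr (Finpartition.embedEquiv f s)
      fun P => embedEquiv m (mapEmbedding f).toEmbedding P.parts

lemma outerBlocks_embedEquiv : ∀ (m : ℕ) {α β : Type} [DecidableEq α] [DecidableEq β]
    (f : α ↪ β) {s : Finset α} (p : HyperPartition m s),
    outerBlocks m (embedEquiv m f s p) = outerBlocks m p
  | 0, _, _, _, _, f, _, _ => card_map f
  | m + 1, _, _, _, _, f, _, ⟨P, q⟩ =>
    (outerBlocks_succ (P.embed f) (embedEquiv m _ P.parts q)).trans
      ((outerBlocks_embedEquiv m _ q).trans (outerBlocks_succ P q).symm)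

def outerBlocksSigmaEquiv {α : Type} [DecidableEq α] (r i : ℕ) (s : Finset α) :
    {p : HyperPartition (r + 1) s // outerBlocks (r + 1) p = i} ≃
      (P : Finpartition s) × {q : HyperPartition r P.parts // outerBlocks r q = i} where
  toFun p := ⟨p.1.1, p.1.2, (outerBlocks_succ _ _).symm.trans p.2⟩
  invFun x := ⟨⟨x.1, x.2.1⟩, (outerBlocks_succ _ _).trans x.2.2⟩
  left_inv _ := rfl
  right_inv _ := rfl

end HyperPartition

lemma card_outerBlocks_eq_hyperStirling {β : Type} [DecidableEq β] (r i : ℕ) (t : Finset β) :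
    Nat.card {q : HyperPartition r t // HyperPartition.outerBlocks r q = i} =
      hyperStirling r #t i := by
  obtain ⟨n, f, rfl⟩ := t.exists_embedding_map_univ_eq
  rw [card_map, card_univ, Fintype.card_fin, hyperStirling]
  exact Nat.card_congr ((HyperPartition.embedEquiv r f univ).subtypeEquiv fun p => by
    rw [HyperPartition.outerBlocks_embedEquiv]).symm

lemma hyperStirling_zero (n i : ℕ) : hyperStirling 0 n i = if n = i then 1 else 0 := by
  simp only [hyperStirling, HyperPartition.outerBlocks, card_univ, Fintype.card_fin]
  split_ifs with h <;> simp [h, HyperPartition]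

lemma hyperStirling_eq_zero_of_lt {r n i : ℕ} (h : n < i) : hyperStirling r n i = 0 := by
  refine Nat.card_eq_zero.2 <| Or.inl ⟨fun ⟨p, hp⟩ => ?_⟩
  have := HyperPartition.outerBlocks_le_card p
  rw [card_univ, Fintype.card_fin] at this
  omega

lemma hyperStirling_zero_right {r n : ℕ} (hn : n ≠ 0) : hyperStirling r n 0 = 0 := by
  refine Nat.card_eq_zero.2 <| Or.inl ⟨fun ⟨p, hp⟩ => ?_⟩
  have huniv : (univ : Finset (Fin n)).Nonempty := univ_nonempty_iff.2 ⟨⟨0, by omega⟩⟩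
  exact (HyperPartition.outerBlocks_pos huniv p).ne' hp

lemma hyperStirling_succ (r n i : ℕ) :
    hyperStirling (r + 1) n i = ∑ k ∈ range (n + 1), stirling n k * hyperStirling r k i := by
  calc hyperStirling (r + 1) n i
      = ∑ P : Finpartition (univ : Finset (Fin n)), hyperStirling r #P.parts i := by
        rw [hyperStirling, Nat.card_congr (HyperPartition.outerBlocksSigmaEquiv r i _),
          Nat.card_sigma]
        simp_rw [card_outerBlocks_eq_hyperStirling]
    _ = ∑ k ∈ range (n + 1), ∑ P : Finpartition (univ : Finset (Fin n)) with #P.parts = k,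
          hyperStirling r k i := by
        rw [← sum_fiberwise_of_maps_to (g := fun P => #P.parts) (t := range (n + 1))]
        · exact sum_congr rfl fun k _ => sum_congr rfl fun P hP => by rw [(mem_filter.1 hP).2]
        · intro P _
          simpa [Nat.lt_succ_iff] using P.card_parts_le_card
    _ = ∑ k ∈ range (n + 1), stirling n k * hyperStirling r k i := by
        simp_rw [sum_const, smul_eq_mul, stirling_eq_card_filter]

theorem bell_add (k r n : ℕ) :
    bell (k + r) n = ∑ i ∈ range (n + 1), bell k i * hyperStirling r n i := by
  induction r generalizing n with
  | zero => simp [hyperStirling_zero]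
  | succ r ih =>
    have hextend {j : ℕ} (hj : j ∈ range (n + 1)) :
        bell (k + r) j = ∑ i ∈ range (n + 1), bell k i * hyperStirling r j i := by
      rw [ih]
      refine sum_subset (range_subset_range.2 (by simpa using hj)) fun i _ hij => ?_
      rw [hyperStirling_eq_zero_of_lt (by simpa using hij), Nat.cast_zero, mul_zero]
    calc bell (k + (r + 1)) n
        = ∑ j ∈ range (n + 1), (stirling n j : ℚ) * bell (k + r) j := bell_succ (k + r) n
      _ = ∑ i ∈ range (n + 1), bell k i *
            ∑ j ∈ range (n + 1), (stirling n j : ℚ) * hyperStirling r j i := by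
        simp_rw [sum_congr rfl fun j hj => congrArg _ (hextend hj), mul_sum]
        rw [sum_comm]
        exact sum_congr rfl fun _ _ => sum_congr rfl fun _ _ => by ring
      _ = ∑ i ∈ range (n + 1), bell k i * hyperStirling (r + 1) n i := by
        simp_rw [hyperStirling_succ, Nat.cast_sum, Nat.cast_mul]

theorem stmt9_general (m r n : ℕ) (hrm : r ≤ m - 1) (hn : 1 ≤ n) :
    bell m n = ∑ i ∈ Finset.Icc 1 n, bell (m - r) i * (hyperStirling r n i : ℚ) := by
  obtain ⟨k, rfl⟩ : ∃ k, m = k + r := ⟨m - r, by omega⟩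
  rw [bell_add, Nat.add_sub_cancel]
  refine (sum_subset (fun i hi => ?_) fun i hi hi' => ?_).symm
  · rw [mem_Icc] at hi
    rw [mem_range]
    omega
  · obtain rfl : i = 0 := by
      rw [mem_range] at hi
      rw [mem_Icc] at hi'
      omega
    rw [hyperStirling_zero_right (by omega), Nat.cast_zero, mul_zero]

/-- `Bₙ^(m) = Σ_{i=1}^n B_i^(m−r) · S^(r)(n,i)` for `m ≥ 1`,
`1 ≤ r ≤ m−1`, `n ≥ 1`. -/
theorem stmt9 (m r n : ℕ) (hm : 1 ≤ m) (hr : 1 ≤ r) (hrm : r ≤ m - 1) (hn : 1 ≤ n) :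
    bell m n = ∑ i ∈ Finset.Icc 1 n, bell (m - r) i * (hyperStirling r n i : ℚ) :=
  stmt9_general m r n hrm hn
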